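/- arXiv:1006.3653 — 6 statements merged into one kernel-verified Lean document; each statement's English description precedes it below -/
import Mathlib

section
/- The Connect Four sum Δ + Δ' of two finite standard sets Δ, Δ' ⊆ ℕ^n is again a standard set, i.e., its complement in ℕ^n is closed under addition of elements of ℕ^n. -/
/-- A standard set: the complement is closed under addition of elements of `ℕ^n`. -/
def IsStdSet {n : ℕ} (Δ : Set (Fin n → ℕ)) : Prop :=
  ∀ β γ : Fin n → ℕ, β ∉ Δ → β + γ ∉ Δ

/-- The column of `Δ ⊆ ℕ^{n+1}` over `γ ∈ ℕ^n`. -/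
def colSet {n : ℕ} (Δ : Set (Fin (n + 1) → ℕ)) (γ : Fin n → ℕ) : Set ℕ :=
  {m | Fin.snoc γ m ∈ Δ}

/-- The Connect Four sum of two subsets of `ℕ^{n+1}`: over each column of `ℕ^n`
one stacks the total number of elements of `Δ` and `Δ'` in that column. -/
def cfSum {n : ℕ} (Δ Δ' : Set (Fin (n + 1) → ℕ)) : Set (Fin (n + 1) → ℕ) :=
  {β | β (Fin.last n) < (colSet Δ (Fin.init β)).ncard + (colSet Δ' (Fin.init β)).ncard}

/-- The Connect Four sum of a finite multiset of subsets of `ℕ^n`, each embedded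
into `ℕ^{n+1}` as `D × {0}`: over a column `γ` one stacks as many boxes as there
are members of the multiset containing `γ` (counted with multiplicity). -/
def cfSumMultiset {n : ℕ} (M : Multiset (Set (Fin n → ℕ))) : Set (Fin (n + 1) → ℕ) :=
  {β | β (Fin.last n) < (M.map fun D => Set.indicator D (fun _ => (1 : ℕ)) (Fin.init β)).sum}

/-- A Connect Four decomposition of `Δ ⊆ ℕ^{n+1}` into a multiset of nonempty
finite standard sets in `ℕ^n`. -/
def IsCFDecomposition {n : ℕ} (M : Multiset (Set (Fin n → ℕ)))
    (Δ : Set (Fin (n + 1) → ℕ)) : Prop :=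
  (∀ D ∈ M, IsStdSet D ∧ D.Finite ∧ D.Nonempty) ∧ cfSumMultiset M = Δ

/-- The Connect Four sum of two finite standard sets is again a standard set. -/
theorem cfSum_isStdSet {n : ℕ} (Δ Δ' : Set (Fin (n + 1) → ℕ))
    (hΔ : IsStdSet Δ) (hΔfin : Δ.Finite) (hΔ' : IsStdSet Δ') (hΔ'fin : Δ'.Finite) :
    IsStdSet (cfSum Δ Δ') := by
  intro β γ hβ hcon
  apply hβ
  simp only [cfSum, Set.mem_setOf_eq] at hcon ⊢
  have hsnoc : ∀ (a b : Fin n → ℕ) (m : ℕ),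
      (Fin.snoc a m : Fin (n + 1) → ℕ) + Fin.snoc b 0 = Fin.snoc (a + b) m := by
    intro a b m
    funext i
    refine Fin.lastCases ?_ ?_ i
    · simp
    · intro j; simp
  have hsub : ∀ (Δ₀ : Set (Fin (n + 1) → ℕ)), IsStdSet Δ₀ →
      colSet Δ₀ (Fin.init β + Fin.init γ) ⊆ colSet Δ₀ (Fin.init β) := by
    intro Δ₀ h m hm
    by_contra hm'
    have := h _ (Fin.snoc (Fin.init γ) 0) hm'
    rw [hsnoc] at this
    exact this hm
  have hfin : ∀ (Δ₀ : Set (Fin (n + 1) → ℕ)), Δ₀.Finite →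
      (colSet Δ₀ (Fin.init β)).Finite := by
    intro Δ₀ h
    have : colSet Δ₀ (Fin.init β) = (fun m => Fin.snoc (Fin.init β) m) ⁻¹' Δ₀ := rfl
    rw [this]
    refine h.preimage (Function.Injective.injOn ?_)
    intro m₁ m₂ hm
    simpa using congrFun hm (Fin.last n)
  have hinit : Fin.init (β + γ) = Fin.init β + Fin.init γ := rfl
  rw [hinit] at hcon
  have h1 : (colSet Δ (Fin.init β + Fin.init γ)).ncard ≤ (colSet Δ (Fin.init β)).ncard :=
    Set.ncard_le_ncard (hsub Δ hΔ) (hfin Δ hΔfin)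
  have h2 : (colSet Δ' (Fin.init β + Fin.init γ)).ncard ≤ (colSet Δ' (Fin.init β)).ncard :=
    Set.ncard_le_ncard (hsub Δ' hΔ') (hfin Δ' hΔ'fin)
  have hβle : β (Fin.last n) ≤ (β + γ) (Fin.last n) := Nat.le_add_right _ _
  omega
end

section
/- Connect Four addition of finite standard sets in ℕ^n is commutative and associative, with the empty set as neutral element; hence the set of finite standard sets in ℕ^n forms a commutative monoid under Connect Four addition. -/
lemma snoc_add {n : ℕ} (γ δ : Fin n → ℕ) (a b : ℕ) :
    (Fin.snoc γ a : Fin (n+1) → ℕ) + Fin.snoc δ b = Fin.snoc (γ + δ) (a + b) := by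
  funext i
  refine Fin.lastCases ?_ ?_ i <;> simp [Fin.snoc_last, Fin.snoc_castSucc]

lemma snoc_inj {n : ℕ} (γ : Fin n → ℕ) :
    Function.Injective (fun m => (Fin.snoc γ m : Fin (n+1) → ℕ)) := by
  intro a b h
  have := congrFun h (Fin.last n)
  simpa using this

lemma ncard_Iio (k : ℕ) : (Set.Iio k).ncard = k := by
  rw [← Finset.coe_Iio, Set.ncard_coe_finset, Nat.card_Iio]

lemma ncard_Iic (k : ℕ) : (Set.Iic k).ncard = k + 1 := by
  rw [← Finset.coe_Iic, Set.ncard_coe_finset, Nat.card_Iic]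

lemma down_closed_eq_Iio (S : Set ℕ) (hfin : S.Finite)
    (hdc : ∀ a b : ℕ, a ≤ b → b ∈ S → a ∈ S) : S = Set.Iio S.ncard := by
  ext m
  constructor
  · intro hm
    have hsub : Set.Iic m ⊆ S := fun x hx => hdc x m hx hm
    have h := Set.ncard_le_ncard hsub hfin
    rw [ncard_Iic] at h
    simpa [Set.mem_Iio] using lt_of_lt_of_le (Nat.lt_succ_self m) h
  · intro hm
    by_contra hns
    have hsub : S ⊆ Set.Iio m := by
      intro x hx
      by_contra hxm
      exact hns (hdc m x (le_of_not_gt hxm) hx)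
    have h := Set.ncard_le_ncard hsub (Set.finite_Iio m)
    rw [ncard_Iio] at h
    simp only [Set.mem_Iio] at hm
    omega

lemma colSet_finite {n : ℕ} {Δ : Set (Fin (n + 1) → ℕ)} (hfin : Δ.Finite)
    (γ : Fin n → ℕ) : (colSet Δ γ).Finite := by
  have : colSet Δ γ = (fun m => (Fin.snoc γ m : Fin (n+1) → ℕ)) ⁻¹' Δ := rfl
  rw [this]
  exact Set.Finite.preimage (Set.injOn_of_injective (snoc_inj γ)) hfin

lemma colSet_dc {n : ℕ} {Δ : Set (Fin (n + 1) → ℕ)} (hstd : IsStdSet Δ)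
    (γ : Fin n → ℕ) : ∀ a b : ℕ, a ≤ b → b ∈ colSet Δ γ → a ∈ colSet Δ γ := by
  intro a b hab hb
  by_contra ha
  have := hstd _ (Fin.snoc 0 (b - a)) ha
  rw [snoc_add] at this
  simp only [add_zero] at this
  rw [Nat.add_sub_cancel' hab] at this
  exact this hb

lemma colSet_eq_Iio {n : ℕ} {Δ : Set (Fin (n + 1) → ℕ)} (hstd : IsStdSet Δ)
    (hfin : Δ.Finite) (γ : Fin n → ℕ) :
    colSet Δ γ = Set.Iio (colSet Δ γ).ncard :=
  down_closed_eq_Iio _ (colSet_finite hfin γ) (colSet_dc hstd γ)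

lemma colSet_mono {n : ℕ} {Δ : Set (Fin (n + 1) → ℕ)} (hstd : IsStdSet Δ)
    (γ δ : Fin n → ℕ) : colSet Δ (γ + δ) ⊆ colSet Δ γ := by
  intro m hm
  by_contra hns
  have := hstd _ (Fin.snoc δ 0) hns
  rw [snoc_add, add_zero] at this
  exact this hm

lemma colSet_ncard_le {n : ℕ} {Δ : Set (Fin (n + 1) → ℕ)} (hfin : Δ.Finite)
    (γ : Fin n → ℕ) : (colSet Δ γ).ncard ≤ Δ.ncard := by
  have h1 : (colSet Δ γ).ncard =
      ((fun m => (Fin.snoc γ m : Fin (n+1) → ℕ)) '' colSet Δ γ).ncard :=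
    (Set.ncard_image_of_injective _ (snoc_inj γ)).symm
  rw [h1]
  apply Set.ncard_le_ncard _ hfin
  rintro x ⟨m, hm, rfl⟩
  exact hm

lemma colSet_cfSum {n : ℕ} (Δ Δ' : Set (Fin (n + 1) → ℕ)) (γ : Fin n → ℕ) :
    colSet (cfSum Δ Δ') γ = Set.Iio ((colSet Δ γ).ncard + (colSet Δ' γ).ncard) := by
  ext m
  simp [colSet, cfSum, Fin.init_snoc, Fin.snoc_last]

lemma ncard_colSet_cfSum {n : ℕ} (Δ Δ' : Set (Fin (n + 1) → ℕ)) (γ : Fin n → ℕ) :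
    (colSet (cfSum Δ Δ') γ).ncard = (colSet Δ γ).ncard + (colSet Δ' γ).ncard := by
  rw [colSet_cfSum, ncard_Iio]

lemma colSet_empty {n : ℕ} (γ : Fin n → ℕ) :
    colSet (∅ : Set (Fin (n + 1) → ℕ)) γ = ∅ := rfl

/-- Connect Four addition of finite standard sets is commutative and associative,
with the empty set as neutral element; moreover the sum of two finite standard
sets is again a finite standard set, so that `𝒟_{n+1}` is a commutative monoid
under Connect Four addition. -/
theorem cfSum_commMonoid {n : ℕ} :
    (∀ Δ Δ' : Set (Fin (n + 1) → ℕ), IsStdSet Δ → Δ.Finite → IsStdSet Δ' → Δ'.Finite →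
      IsStdSet (cfSum Δ Δ') ∧ (cfSum Δ Δ').Finite) ∧
    (∀ Δ Δ' : Set (Fin (n + 1) → ℕ), IsStdSet Δ → Δ.Finite → IsStdSet Δ' → Δ'.Finite →
      cfSum Δ Δ' = cfSum Δ' Δ) ∧
    (∀ Δ₁ Δ₂ Δ₃ : Set (Fin (n + 1) → ℕ),
      IsStdSet Δ₁ → Δ₁.Finite → IsStdSet Δ₂ → Δ₂.Finite → IsStdSet Δ₃ → Δ₃.Finite →
      cfSum (cfSum Δ₁ Δ₂) Δ₃ = cfSum Δ₁ (cfSum Δ₂ Δ₃)) ∧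
    (∀ Δ : Set (Fin (n + 1) → ℕ), IsStdSet Δ → Δ.Finite →
      cfSum Δ ∅ = Δ ∧ cfSum ∅ Δ = Δ) := by
  refine ⟨?_, ?_, ?_, ?_⟩
  · -- closedness
    intro Δ Δ' hstd hfin hstd' hfin'
    constructor
    · -- standard
      intro β γ hβ
      simp only [cfSum, Set.mem_setOf_eq, not_lt] at hβ ⊢
      have hinit : Fin.init (β + γ) = Fin.init β + Fin.init γ := rfl
      have hlast : (β + γ) (Fin.last n) = β (Fin.last n) + γ (Fin.last n) := rfl
      rw [hinit, hlast]
      have h1 := Set.ncard_le_ncard (colSet_mono hstd (Fin.init β) (Fin.init γ))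
        (colSet_finite hfin _)
      have h2 := Set.ncard_le_ncard (colSet_mono hstd' (Fin.init β) (Fin.init γ))
        (colSet_finite hfin' _)
      omega
    · -- finite
      apply Set.Finite.subset (Set.Finite.image (fun p : ((Fin n → ℕ) × ℕ) => Fin.snoc p.1 p.2)
        (Set.Finite.prod ((hfin.image Fin.init).union (hfin'.image Fin.init))
          (Set.finite_Iio (Δ.ncard + Δ'.ncard))))
      intro β hβ
      simp only [cfSum, Set.mem_setOf_eq] at hβ
      refine ⟨(Fin.init β, β (Fin.last n)), ⟨?_, ?_⟩, Fin.snoc_init_self β⟩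
      · -- column nonempty
        rcases (by omega : (colSet Δ (Fin.init β)).ncard ≠ 0 ∨
            (colSet Δ' (Fin.init β)).ncard ≠ 0) with h' | h'
        · obtain ⟨m, hm⟩ := Set.nonempty_of_ncard_ne_zero h'
          exact Or.inl ⟨Fin.snoc (Fin.init β) m, hm, by simp [Fin.init_snoc]⟩
        · obtain ⟨m, hm⟩ := Set.nonempty_of_ncard_ne_zero h'
          exact Or.inr ⟨Fin.snoc (Fin.init β) m, hm, by simp [Fin.init_snoc]⟩
      · have h1 := colSet_ncard_le hfin (Fin.init β)
        have h2 := colSet_ncard_le hfin' (Fin.init β)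
        simp only [Set.mem_Iio]
        omega
  · -- commutativity
    intro Δ Δ' _ _ _ _
    ext β
    simp only [cfSum, Set.mem_setOf_eq]
    omega
  · -- associativity
    intro Δ₁ Δ₂ Δ₃ _ _ _ _ _ _
    ext β
    show β (Fin.last n) < (colSet (cfSum Δ₁ Δ₂) (Fin.init β)).ncard
        + (colSet Δ₃ (Fin.init β)).ncard ↔
      β (Fin.last n) < (colSet Δ₁ (Fin.init β)).ncard
        + (colSet (cfSum Δ₂ Δ₃) (Fin.init β)).ncard
    rw [ncard_colSet_cfSum, ncard_colSet_cfSum]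
    omega
  · -- identity
    intro Δ hstd hfin
    have key : cfSum Δ ∅ = Δ := by
      ext β
      simp only [cfSum, Set.mem_setOf_eq, colSet_empty, Set.ncard_empty, add_zero]
      constructor
      · intro h
        have : β (Fin.last n) ∈ colSet Δ (Fin.init β) := by
          rw [colSet_eq_Iio hstd hfin]
          exact h
        rw [← Fin.snoc_init_self β]
        exact this
      · intro h
        have : β (Fin.last n) ∈ colSet Δ (Fin.init β) := by
          show Fin.snoc (Fin.init β) (β (Fin.last n)) ∈ Δ
          rw [Fin.snoc_init_self β]
          exact h
        rw [colSet_eq_Iio hstd hfin] at this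
        exact this
    refine ⟨key, ?_⟩
    ext β
    simp only [cfSum, Set.mem_setOf_eq, colSet_empty, Set.ncard_empty, zero_add]
    have := Set.ext_iff.mp key β
    simpa [cfSum, colSet_empty] using this
end

section
/- The standard set Δ = {0, e₁, e₂, e₃} ⊆ ℕ³ admits exactly two Connect Four decompositions into nonempty standard sets in ℕ²: {{0, e₁, e₂}, {0}} and {{0, e₁}, {0, e₂}}. -/
section Aux

lemma vec2_eq (γ : Fin 2 → ℕ) (a b : ℕ) : γ = ![a,b] ↔ γ 0 = a ∧ γ 1 = b := by
  constructor
  · rintro rfl; simp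
  · rintro ⟨h0, h1⟩; funext i; fin_cases i <;> simpa

lemma vec3_eq (β : Fin 3 → ℕ) (a b c : ℕ) : β = ![a,b,c] ↔ β 0 = a ∧ β 1 = b ∧ β 2 = c := by
  constructor
  · rintro rfl; simp
  · rintro ⟨h0, h1, h2⟩; funext i; fin_cases i <;> simpa

lemma memD (β : Fin 3 → ℕ) :
    β ∈ ({![0,0,0], ![1,0,0], ![0,1,0], ![0,0,1]} : Set (Fin 3 → ℕ)) ↔ β 0 + β 1 + β 2 ≤ 1 := by
  simp only [Set.mem_insert_iff, Set.mem_singleton_iff, vec3_eq]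
  omega

lemma memT (γ : Fin 2 → ℕ) :
    γ ∈ ({![0,0], ![1,0], ![0,1]} : Set (Fin 2 → ℕ)) ↔ γ 0 + γ 1 ≤ 1 := by
  simp only [Set.mem_insert_iff, Set.mem_singleton_iff, vec2_eq]
  omega

lemma memZ (γ : Fin 2 → ℕ) :
    γ ∈ ({![0,0]} : Set (Fin 2 → ℕ)) ↔ γ 0 = 0 ∧ γ 1 = 0 := by
  simp only [Set.mem_singleton_iff, vec2_eq]

lemma memEx (γ : Fin 2 → ℕ) :
    γ ∈ ({![0,0], ![1,0]} : Set (Fin 2 → ℕ)) ↔ γ 0 ≤ 1 ∧ γ 1 = 0 := by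
  simp only [Set.mem_insert_iff, Set.mem_singleton_iff, vec2_eq]
  omega

lemma memEy (γ : Fin 2 → ℕ) :
    γ ∈ ({![0,0], ![0,1]} : Set (Fin 2 → ℕ)) ↔ γ 0 = 0 ∧ γ 1 ≤ 1 := by
  simp only [Set.mem_insert_iff, Set.mem_singleton_iff, vec2_eq]
  omega

lemma init0 (β : Fin 3 → ℕ) : Fin.init β 0 = β 0 := rfl
lemma init1 (β : Fin 3 → ℕ) : Fin.init β 1 = β 1 := rfl
lemma last2 (β : Fin 3 → ℕ) : β (Fin.last 2) = β 2 := rfl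
lemma e00 : (![0,0] : Fin 2 → ℕ) = 0 := by funext i; fin_cases i <;> rfl

lemma stdT : IsStdSet ({![0,0], ![1,0], ![0,1]} : Set (Fin 2 → ℕ)) := by
  intro β γ hβ h
  rw [memT] at hβ h
  simp only [Pi.add_apply] at h
  omega

lemma stdZ : IsStdSet ({![0,0]} : Set (Fin 2 → ℕ)) := by
  intro β γ hβ h
  rw [memZ] at hβ h
  simp only [Pi.add_apply] at h
  omega

lemma stdEx : IsStdSet ({![0,0], ![1,0]} : Set (Fin 2 → ℕ)) := by
  intro β γ hβ h
  rw [memEx] at hβ h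
  simp only [Pi.add_apply] at h
  omega

lemma stdEy : IsStdSet ({![0,0], ![0,1]} : Set (Fin 2 → ℕ)) := by
  intro β γ hβ h
  rw [memEy] at hβ h
  simp only [Pi.add_apply] at h
  omega

open Classical in
lemma cf_pair (A B : Set (Fin 2 → ℕ)) (β : Fin 3 → ℕ) :
    β ∈ cfSumMultiset {A, B} ↔
      β 2 < A.indicator (fun _ => (1:ℕ)) (Fin.init β) + B.indicator (fun _ => (1:ℕ)) (Fin.init β) := by
  simp only [cfSumMultiset, Set.mem_setOf_eq, Multiset.insert_eq_cons, Multiset.map_cons,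
    Multiset.map_singleton, Multiset.sum_cons, Multiset.sum_singleton, last2]

lemma tri (γ : Fin 2 → ℕ) (h : γ 0 + γ 1 ≤ 1) :
    γ = ![0,0] ∨ γ = ![1,0] ∨ γ = ![0,1] := by
  rw [vec2_eq, vec2_eq, vec2_eq]; omega

lemma eqT (A : Set (Fin 2 → ℕ)) (hsub : ∀ γ ∈ A, γ 0 + γ 1 ≤ 1)
    (h0 : (0 : Fin 2 → ℕ) ∈ A) (h1 : (![1,0] : Fin 2 → ℕ) ∈ A)
    (h2 : (![0,1] : Fin 2 → ℕ) ∈ A) :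
    A = ({![0,0], ![1,0], ![0,1]} : Set (Fin 2 → ℕ)) := by
  ext γ
  rw [memT]
  refine ⟨hsub γ, fun h => ?_⟩
  rcases tri γ h with rfl | rfl | rfl
  · rwa [e00]
  · exact h1
  · exact h2

lemma eqZ (A : Set (Fin 2 → ℕ)) (hsub : ∀ γ ∈ A, γ 0 + γ 1 ≤ 1)
    (h0 : (0 : Fin 2 → ℕ) ∈ A) (h1 : (![1,0] : Fin 2 → ℕ) ∉ A)
    (h2 : (![0,1] : Fin 2 → ℕ) ∉ A) :
    A = ({![0,0]} : Set (Fin 2 → ℕ)) := by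
  ext γ
  rw [memZ]
  constructor
  · intro hγ
    rcases tri γ (hsub γ hγ) with rfl | rfl | rfl
    · simp
    · exact absurd hγ h1
    · exact absurd hγ h2
  · intro h
    have : γ = ![0,0] := by rw [vec2_eq]; omega
    rw [this, e00]; exact h0

lemma eqEx (A : Set (Fin 2 → ℕ)) (hsub : ∀ γ ∈ A, γ 0 + γ 1 ≤ 1)
    (h0 : (0 : Fin 2 → ℕ) ∈ A) (h1 : (![1,0] : Fin 2 → ℕ) ∈ A)
    (h2 : (![0,1] : Fin 2 → ℕ) ∉ A) :
    A = ({![0,0], ![1,0]} : Set (Fin 2 → ℕ)) := by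
  ext γ
  rw [memEx]
  constructor
  · intro hγ
    rcases tri γ (hsub γ hγ) with rfl | rfl | rfl
    · simp
    · simp
    · exact absurd hγ h2
  · intro h
    have : γ = ![0,0] ∨ γ = ![1,0] := by rw [vec2_eq, vec2_eq]; omega
    rcases this with rfl | rfl
    · rwa [e00]
    · exact h1

lemma eqEy (A : Set (Fin 2 → ℕ)) (hsub : ∀ γ ∈ A, γ 0 + γ 1 ≤ 1)
    (h0 : (0 : Fin 2 → ℕ) ∈ A) (h1 : (![1,0] : Fin 2 → ℕ) ∉ A)
    (h2 : (![0,1] : Fin 2 → ℕ) ∈ A) :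
    A = ({![0,0], ![0,1]} : Set (Fin 2 → ℕ)) := by
  ext γ
  rw [memEy]
  constructor
  · intro hγ
    rcases tri γ (hsub γ hγ) with rfl | rfl | rfl
    · simp
    · exact absurd hγ h1
    · simp
  · intro h
    have : γ = ![0,0] ∨ γ = ![0,1] := by rw [vec2_eq, vec2_eq]; omega
    rcases this with rfl | rfl
    · rwa [e00]
    · exact h2

end Aux

/-- The standard set `Δ = {0, e₁, e₂, e₃} ⊆ ℕ³` admits exactly two Connect Four
decompositions into nonempty standard sets of `ℕ²`, namely
`{{0, e₁, e₂}, {0}}` and `{{0, e₁}, {0, e₂}}`. -/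
theorem sturmfels_example_decompositions (M : Multiset (Set (Fin 2 → ℕ))) :
    IsCFDecomposition M
      ({![0,0,0], ![1,0,0], ![0,1,0], ![0,0,1]} : Set (Fin 3 → ℕ)) ↔
    M = ({({![0,0], ![1,0], ![0,1]} : Set (Fin 2 → ℕ)), {![0,0]}} : Multiset (Set (Fin 2 → ℕ))) ∨
    M = ({({![0,0], ![1,0]} : Set (Fin 2 → ℕ)), {![0,0], ![0,1]}} : Multiset (Set (Fin 2 → ℕ))) := by
  constructor
  · rintro ⟨hstd, hM⟩
    -- every member contains 0
    have hzero : ∀ D ∈ M, (0 : Fin 2 → ℕ) ∈ D := by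
      intro D hD
      obtain ⟨hs, -, x, hx⟩ := hstd D hD
      by_contra h0
      exact hs 0 x h0 (by simpa using hx)
    -- column heights
    have hf : ∀ γ : Fin 2 → ℕ,
        (M.map fun D => Set.indicator D (fun _ => (1:ℕ)) γ).sum = 2 - (γ 0 + γ 1) := by
      intro γ
      have h1 : ∀ m : ℕ, (m < (M.map fun D => Set.indicator D (fun _ => (1:ℕ)) γ).sum ↔
          γ 0 + γ 1 + m ≤ 1) := by
        intro m
        have h2 := Set.ext_iff.mp hM (Fin.snoc γ m)
        rw [memD] at h2
        simp only [cfSumMultiset, Set.mem_setOf_eq, Fin.init_snoc, last2] at h2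
        have e0 : (Fin.snoc γ m : Fin 3 → ℕ) 0 = γ 0 := rfl
        have e1 : (Fin.snoc γ m : Fin 3 → ℕ) 1 = γ 1 := rfl
        have e2 : (Fin.snoc γ m : Fin 3 → ℕ) 2 = m := rfl
        rw [e0, e1, e2] at h2
        exact h2
      have ha := h1 ((M.map fun D => Set.indicator D (fun _ => (1:ℕ)) γ).sum)
      have hb := h1 (2 - (γ 0 + γ 1))
      omega
    -- M has exactly two members
    have hcard : Multiset.card M = 2 := by
      have h0 := hf 0
      have hcongr : (M.map fun D => Set.indicator D (fun _ => (1:ℕ)) 0) =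
          M.map (fun _ => (1:ℕ)) :=
        Multiset.map_congr rfl (fun D hD => Set.indicator_of_mem (hzero D hD) _)
      rw [hcongr] at h0
      simp at h0
      simpa using h0
    obtain ⟨A, B, rfl⟩ := Multiset.card_eq_two.mp hcard
    have hAB : ∀ γ : Fin 2 → ℕ,
        A.indicator (fun _ => (1:ℕ)) γ + B.indicator (fun _ => (1:ℕ)) γ = 2 - (γ 0 + γ 1) := by
      intro γ
      have := hf γ
      simpa [Multiset.insert_eq_cons] using this
    have h0A : (0 : Fin 2 → ℕ) ∈ A := hzero A (by simp)
    have h0B : (0 : Fin 2 → ℕ) ∈ B := hzero B (by simp [Multiset.insert_eq_cons])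
    -- nothing else outside {0,e1,e2} is in A or B
    have hbig : ∀ γ : Fin 2 → ℕ, 2 ≤ γ 0 + γ 1 → γ ∉ A ∧ γ ∉ B := by
      intro γ hγ
      have h := hAB γ
      constructor
      · intro hm
        rw [Set.indicator_of_mem hm] at h
        omega
      · intro hm
        rw [Set.indicator_of_mem hm] at h
        omega
    have hsubA : ∀ γ ∈ A, γ 0 + γ 1 ≤ 1 := by
      intro γ hγ; by_contra hc; exact (hbig γ (by omega)).1 hγ
    have hsubB : ∀ γ ∈ B, γ 0 + γ 1 ≤ 1 := by
      intro γ hγ; by_contra hc; exact (hbig γ (by omega)).2 hγ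
    have hE1 := hAB ![1,0]
    have hE2 := hAB ![0,1]
    norm_num at hE1 hE2
    -- case analysis on who contains e1, e2
    by_cases hA1 : (![1,0] : Fin 2 → ℕ) ∈ A <;> by_cases hB1 : (![1,0] : Fin 2 → ℕ) ∈ B <;>
      by_cases hA2 : (![0,1] : Fin 2 → ℕ) ∈ A <;> by_cases hB2 : (![0,1] : Fin 2 → ℕ) ∈ B <;>
      first
        | (exfalso;
           first
             | (rw [Set.indicator_of_mem hA1, Set.indicator_of_mem hB1] at hE1; omega)
             | (rw [Set.indicator_of_notMem hA1, Set.indicator_of_notMem hB1] at hE1; omega)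
             | (rw [Set.indicator_of_mem hA2, Set.indicator_of_mem hB2] at hE2; omega)
             | (rw [Set.indicator_of_notMem hA2, Set.indicator_of_notMem hB2] at hE2; omega))
        | skip
    · left
      rw [eqT A hsubA h0A hA1 hA2, eqZ B hsubB h0B hB1 hB2]
    · right
      rw [eqEx A hsubA h0A hA1 hA2, eqEy B hsubB h0B hB1 hB2]
    · right
      rw [eqEy A hsubA h0A hA1 hA2, eqEx B hsubB h0B hB1 hB2]
      exact Multiset.pair_comm _ _
    · left
      rw [eqZ A hsubA h0A hA1 hA2, eqT B hsubB h0B hB1 hB2]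
      exact Multiset.pair_comm _ _
  · rintro (rfl | rfl)
    · constructor
      · intro D hD
        simp only [Multiset.insert_eq_cons, Multiset.mem_cons, Multiset.mem_singleton] at hD
        rcases hD with rfl | rfl
        · exact ⟨stdT, (Set.finite_singleton _).insert _ |>.insert _,
            ⟨![0,0], Set.mem_insert _ _⟩⟩
        · exact ⟨stdZ, Set.finite_singleton _, ⟨![0,0], rfl⟩⟩
      · ext β
        rw [cf_pair, memD]
        by_cases hT : Fin.init β ∈ ({![0,0], ![1,0], ![0,1]} : Set (Fin 2 → ℕ)) <;>
          by_cases hZ : Fin.init β ∈ ({![0,0]} : Set (Fin 2 → ℕ)) <;>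
          [rw [Set.indicator_of_mem hT, Set.indicator_of_mem hZ];
           rw [Set.indicator_of_mem hT, Set.indicator_of_notMem hZ];
           rw [Set.indicator_of_notMem hT, Set.indicator_of_mem hZ];
           rw [Set.indicator_of_notMem hT, Set.indicator_of_notMem hZ]] <;>
          rw [memT, init0, init1] at hT <;> rw [memZ, init0, init1] at hZ <;> omega
    · constructor
      · intro D hD
        simp only [Multiset.insert_eq_cons, Multiset.mem_cons, Multiset.mem_singleton] at hD
        rcases hD with rfl | rfl
        · exact ⟨stdEx, (Set.finite_singleton _).insert _, ⟨![0,0], Set.mem_insert _ _⟩⟩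
        · exact ⟨stdEy, (Set.finite_singleton _).insert _, ⟨![0,0], Set.mem_insert _ _⟩⟩
      · ext β
        rw [cf_pair, memD]
        by_cases hT : Fin.init β ∈ ({![0,0], ![1,0]} : Set (Fin 2 → ℕ)) <;>
          by_cases hZ : Fin.init β ∈ ({![0,0], ![0,1]} : Set (Fin 2 → ℕ)) <;>
          [rw [Set.indicator_of_mem hT, Set.indicator_of_mem hZ];
           rw [Set.indicator_of_mem hT, Set.indicator_of_notMem hZ];
           rw [Set.indicator_of_notMem hT, Set.indicator_of_mem hZ];
           rw [Set.indicator_of_notMem hT, Set.indicator_of_notMem hZ]] <;>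
          rw [memEx, init0, init1] at hT <;> rw [memEy, init0, init1] at hZ <;> omega
end

section
/- Let F̄ be an algebraically closed field and A ⊆ F̄^n a finite set. With D(A) the lex standard set of the vanishing ideal of A and A_λ := A ∩ {x_n = λ} viewed in F̄^{n−1}, one has D(A) = Σ_{λ ∈ F̄} D(A_λ), the Connect Four sum of the standard sets of the slices (all but finitely many summands are empty, and each D(A_λ) ∈ 𝒟_{n−1} is embedded into ℕ^n as D(A_λ)×{0}). -/
/-- Lexicographic order on exponent vectors for `x₁ ≻ x₂ ≻ … ≻ x_n`:
`α ≺ β` iff at the first index where they differ, `α` is smaller. -/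
def lexLT {n : ℕ} (α β : Fin n → ℕ) : Prop :=
  ∃ i : Fin n, (∀ j : Fin n, j < i → α j = β j) ∧ α i < β i

/-- `α` is the leading exponent (w.r.t. lex) of the polynomial `p`. -/
def IsLeadExp {n : ℕ} {k : Type*} [CommSemiring k]
    (p : MvPolynomial (Fin n) k) (α : Fin n → ℕ) : Prop :=
  MvPolynomial.coeff (Finsupp.equivFunOnFinite.symm α) p ≠ 0 ∧
    ∀ β : Fin n → ℕ, MvPolynomial.coeff (Finsupp.equivFunOnFinite.symm β) p ≠ 0 →
      β = α ∨ lexLT β α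

/-- The standard set `D(A)` of the vanishing ideal of a set of points
`A ⊆ K^n`, w.r.t. the lexicographic order with `x₁ ≻ … ≻ x_n`: the complement of
the set of leading exponents of nonzero polynomials vanishing on `A`. -/
def stdOfPoints {n : ℕ} {K : Type*} [Field K] (A : Set (Fin n → K)) : Set (Fin n → ℕ) :=
  {β | ¬ ∃ p : MvPolynomial (Fin n) K,
    (∀ a ∈ A, MvPolynomial.eval a p = 0) ∧ p ≠ 0 ∧ IsLeadExp p β}

/-!
Write `β = (γ, m)` and let `Λ` be the set of `t` with `γ ∈ D(A_t)`. Viewing a polynomial `p` in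
`x₁, …, x_{n+1}` as one in `x₁, …, xₙ` with coefficients in `K[x_{n+1}]`, `p` has lex-leading
exponent `(γ, m)` iff `γ` is the lex-largest exponent with a nonzero coefficient `p_γ`, and
`deg p_γ = m`.

If such a `p` vanishes on `A`, then for `t ∈ Λ` the specialisation `p(·, t)` vanishes on `A_t`,
so `p_γ(t) = 0`, as otherwise `γ` would be the leading exponent of `p(·, t)`. Hence
`|Λ| ≤ deg p_γ = m`.

Conversely, if `|Λ| ≤ m`, take `e ∈ K[x_{n+1}]` of degree `m` vanishing on `Λ` and, for the other
last coordinates `t` of points of `A`, polynomials `q_t` with leading term `x^γ` vanishing on `A_t`.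
Lagrange interpolation in `x_{n+1}` glues the `q_t` to a `Q` whose coefficient at `γ` is `1` and
whose other exponents are lex-smaller than `γ`; then `e · Q` vanishes on `A` and has leading
exponent `(γ, m)`.
-/

open MvPolynomial
open scoped Polynomial
open Finsupp (equivFunOnFinite)

lemma lexLT_irrefl {n : ℕ} (γ : Fin n → ℕ) : ¬ lexLT γ γ :=
  fun ⟨_, _, h⟩ => h.false

lemma lexLT_snoc_snoc_iff {n : ℕ} {δ γ : Fin n → ℕ} {j m : ℕ} :
    lexLT (Fin.snoc δ j : Fin (n + 1) → ℕ) (Fin.snoc γ m) ↔ lexLT δ γ ∨ δ = γ ∧ j < m := by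
  constructor
  · rintro ⟨i, hlt, hi⟩
    induction i using Fin.lastCases with
    | last =>
      refine Or.inr ⟨funext fun k => ?_, by simpa using hi⟩
      simpa using hlt k.castSucc (Fin.castSucc_lt_last k)
    | cast i =>
      refine Or.inl ⟨i, fun k hk => ?_, by simpa using hi⟩
      simpa using hlt k.castSucc (Fin.castSucc_lt_castSucc_iff.mpr hk)
  · rintro (⟨i, hlt, hi⟩ | ⟨rfl, hjm⟩)
    · refine ⟨i.castSucc, fun k hk => ?_, by simpa using hi⟩
      induction k using Fin.lastCases with
      | last => exact absurd hk (Fin.castSucc_lt_last i).not_gt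
      | cast k => simpa using hlt k (Fin.castSucc_lt_castSucc_iff.mp hk)
    · refine ⟨Fin.last n, fun k hk => ?_, by simpa using hjm⟩
      induction k using Fin.lastCases with
      | last => exact absurd hk (lt_irrefl _)
      | cast k => simp

section CommSemiring

variable {R : Type*} [CommSemiring R] {n : ℕ}

noncomputable def splitLast : MvPolynomial (Fin (n + 1)) R ≃ₐ[R] MvPolynomial (Fin n) R[X] :=
  (renameEquiv R finSuccEquivLast).trans (optionEquivRight R (Fin n))

@[simp] lemma splitLast_C (c : R) :
    splitLast (C c : MvPolynomial (Fin (n + 1)) R) = C (Polynomial.C c) :=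
  splitLast.commutes c

@[simp] lemma splitLast_X_castSucc (i : Fin n) :
    splitLast (X i.castSucc : MvPolynomial (Fin (n + 1)) R) = X i := by
  simp [splitLast]

@[simp] lemma splitLast_X_last :
    splitLast (X (Fin.last n) : MvPolynomial (Fin (n + 1)) R) = C Polynomial.X := by
  simp [splitLast]

lemma splitLast_monomial (u : Fin (n + 1) →₀ ℕ) (c : R) :
    splitLast (monomial u c) =
      monomial (equivFunOnFinite.symm (Fin.init u)) (Polynomial.monomial (u (Fin.last n)) c) := by
  rw [monomial_eq, monomial_eq, Finsupp.prod_fintype _ _ (fun _ => pow_zero _),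
    Finsupp.prod_fintype _ _ (fun _ => pow_zero _), map_mul, map_prod, Fin.prod_univ_castSucc]
  simp [Fin.init, Polynomial.C_mul_X_pow_eq_monomial.symm]
  ring

lemma eq_equivFunOnFinite_symm_snoc_iff (u : Fin (n + 1) →₀ ℕ) (δ : Fin n → ℕ) (j : ℕ) :
    u = equivFunOnFinite.symm (Fin.snoc δ j) ↔ Fin.init u = δ ∧ u (Fin.last n) = j := by
  rw [Equiv.eq_symm_apply]
  change ⇑u = _ ↔ _
  constructor
  · rintro h; simp [h]
  · rintro ⟨rfl, rfl⟩; exact (Fin.snoc_init_self _).symm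

lemma coeff_coeff_splitLast (p : MvPolynomial (Fin (n + 1)) R) (δ : Fin n → ℕ) (j : ℕ) :
    ((splitLast p).coeff (equivFunOnFinite.symm δ)).coeff j =
      p.coeff (equivFunOnFinite.symm (Fin.snoc δ j)) := by
  induction p using MvPolynomial.induction_on' with
  | monomial u c =>
    rw [splitLast_monomial, coeff_monomial, coeff_monomial, apply_ite (Polynomial.coeff · j),
      Polynomial.coeff_monomial, Polynomial.coeff_zero]
    simp only [equivFunOnFinite.symm.injective.eq_iff, eq_equivFunOnFinite_symm_snoc_iff, ite_and]
  | add p q hp hq => simp only [map_add, coeff_add, Polynomial.coeff_add, hp, hq]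

lemma eval_snoc_eq_eval_map_splitLast (p : MvPolynomial (Fin (n + 1)) R) (a : Fin n → R) (t : R) :
    eval (Fin.snoc a t) p = eval a (map (Polynomial.evalRingHom t) (splitLast p)) := by
  induction p using MvPolynomial.induction_on with
  | C c => simp
  | add p q hp hq => simp only [map_add, hp, hq]
  | mul_X p i hp =>
    induction i using Fin.lastCases <;> simp [hp]

lemma IsLeadExp.ne_zero {p : MvPolynomial (Fin n) R} {α : Fin n → ℕ} (hp : IsLeadExp p α) :
    p ≠ 0 :=
  fun h => hp.1 (by rw [h, coeff_zero])

lemma isLeadExp_monomial [Nontrivial R] (γ : Fin n → ℕ) :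
    IsLeadExp (monomial (equivFunOnFinite.symm γ) (1 : R)) γ :=
  ⟨by simp, fun β hβ => Or.inl (by simpa [coeff_monomial, eq_comm] using hβ)⟩

theorem isLeadExp_snoc_iff {p : MvPolynomial (Fin (n + 1)) R} {γ : Fin n → ℕ} {m : ℕ} :
    IsLeadExp p (Fin.snoc γ m) ↔
      ((splitLast p).coeff (equivFunOnFinite.symm γ)).degree = m ∧
        ∀ δ, (splitLast p).coeff (equivFunOnFinite.symm δ) ≠ 0 → δ = γ ∨ lexLT δ γ := by
  have hcoeff := coeff_coeff_splitLast p
  constructor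
  · rintro ⟨hlead, hbelow⟩
    have hcol : ∀ δ j, ((splitLast p).coeff (equivFunOnFinite.symm δ)).coeff j ≠ 0 →
        δ = γ ∧ j ≤ m ∨ lexLT δ γ := by
      intro δ j h
      rw [hcoeff] at h
      rcases hbelow _ h with h | h
      · obtain ⟨rfl, rfl⟩ := Fin.snoc_inj.mp h
        exact Or.inl ⟨rfl, le_rfl⟩
      · rcases lexLT_snoc_snoc_iff.mp h with h | ⟨rfl, hj⟩
        exacts [Or.inr h, Or.inl ⟨rfl, hj.le⟩]
    refine ⟨Polynomial.degree_eq_of_le_of_coeff_ne_zero ?_ (by rwa [hcoeff]), fun δ hδ => ?_⟩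
    · refine (Polynomial.degree_le_iff_coeff_zero _ _).mpr fun j hj => ?_
      by_contra h
      rcases hcol γ j h with ⟨-, h⟩ | h
      · exact absurd hj (not_lt.mpr (WithBot.coe_le_coe.mpr h))
      · exact lexLT_irrefl γ h
    · obtain ⟨j, hj⟩ := Polynomial.ext_iff.not.mp hδ |> not_forall.mp
      rcases hcol δ j hj with ⟨h, -⟩ | h
      exacts [Or.inl h, Or.inr h]
  · rintro ⟨hdeg, hcols⟩
    refine ⟨by rw [← hcoeff]; exact Polynomial.coeff_ne_zero_of_eq_degree hdeg, fun β hβ => ?_⟩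
    obtain ⟨δ, j, rfl⟩ : ∃ δ j, β = Fin.snoc δ j := ⟨_, _, (Fin.snoc_init_self β).symm⟩
    rw [← hcoeff] at hβ
    have hcol : (splitLast p).coeff (equivFunOnFinite.symm δ) ≠ 0 :=
      fun h => hβ (by rw [h, Polynomial.coeff_zero])
    rcases hcols δ hcol with rfl | h
    · have hle : j ≤ m := by exact_mod_cast hdeg ▸ Polynomial.le_degree_of_ne_zero hβ
      rcases hle.eq_or_lt with rfl | h
      exacts [Or.inl rfl, Or.inr (lexLT_snoc_snoc_iff.mpr (Or.inr ⟨rfl, h⟩))]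
    · exact Or.inr (lexLT_snoc_snoc_iff.mpr (Or.inl h))

lemma isLeadExp_map_evalRingHom_splitLast {p : MvPolynomial (Fin (n + 1)) R} {γ : Fin n → ℕ}
    {m : ℕ} (hp : IsLeadExp p (Fin.snoc γ m)) {t : R}
    (ht : ((splitLast p).coeff (equivFunOnFinite.symm γ)).eval t ≠ 0) :
    IsLeadExp (map (Polynomial.evalRingHom t) (splitLast p)) γ :=
  ⟨by rwa [coeff_map], fun δ hδ =>
    (isLeadExp_snoc_iff.mp hp).2 δ fun h => hδ (by rw [coeff_map, h, map_zero])⟩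

end CommSemiring

section Field

variable {K : Type*} [Field K] {n : ℕ}

lemma exists_degree_eq_forall_eval_eq_zero {R : Type*} [CommRing R] [IsDomain R]
    (S : Finset R) {m : ℕ} (hS : S.card ≤ m) : ∃ e : R[X], e.degree = m ∧ ∀ t ∈ S, e.eval t = 0 := by
  refine ⟨Lagrange.nodal S id * Polynomial.X ^ (m - S.card), ?_, fun t ht => ?_⟩
  · rw [Polynomial.degree_mul, Lagrange.degree_nodal, Polynomial.degree_X_pow, ← Nat.cast_add,
      Nat.add_sub_cancel' hS]
  · rw [Polynomial.eval_mul]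
    exact mul_eq_zero_of_left (Lagrange.eval_nodal_at_node (v := id) ht) _

lemma exists_interpolation_of_coeff_eq_one {σ : Type*} (s : Finset K) (q : K → MvPolynomial σ K)
    (d : σ →₀ ℕ) (hq : ∀ μ ∈ s, (q μ).coeff d = 1) :
    ∃ Q : MvPolynomial σ K[X], (∀ t ∈ s, map (Polynomial.evalRingHom t) Q = q t) ∧
      Q.coeff d = 1 ∧ ∀ d', Q.coeff d' ≠ 0 → d' = d ∨ ∃ μ ∈ s, (q μ).coeff d' ≠ 0 := by
  classical
  set Q := monomial d 1 + ∑ μ ∈ s, C (Lagrange.basis s id μ) * map Polynomial.C (q μ - monomial d 1)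
  have hcoeff : ∀ d', Q.coeff d' = (if d = d' then 1 else 0) +
      ∑ μ ∈ s, Lagrange.basis s id μ * Polynomial.C ((q μ).coeff d' - if d = d' then 1 else 0) := by
    intro d'
    simp only [Q, coeff_add, coeff_sum, coeff_C_mul, coeff_map, coeff_sub, coeff_monomial]
  refine ⟨Q, fun t ht => ?_, ?_, fun d' hd' => ?_⟩
  · have hbasis : ∀ μ ∈ s, (Lagrange.basis s id μ).eval t = if μ = t then 1 else 0 := by
      intro μ hμ
      split_ifs with h
      · exact h ▸ Lagrange.eval_basis_self (v := id) (Set.injOn_id _) hμ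
      · exact Lagrange.eval_basis_of_ne (v := id) h ht
    have hC : (Polynomial.evalRingHom t).comp Polynomial.C = RingHom.id K :=
      Polynomial.eval₂RingHom_comp_C _ _
    simp only [Q, map_add, map_sum, map_mul, map_C, map_map, map_monomial,
      Polynomial.coe_evalRingHom, Polynomial.eval_one, hC, map_id]
    rw [Finset.sum_eq_single_of_mem t ht fun μ hμ hμt => by
        rw [hbasis μ hμ, if_neg hμt, C_0, zero_mul],
      hbasis t ht, if_pos rfl, C_1, one_mul, add_sub_cancel]
  · rw [hcoeff, Finset.sum_eq_zero fun μ hμ => by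
        rw [if_pos rfl, hq μ hμ, sub_self, map_zero, mul_zero],
      if_pos rfl, add_zero]
  · by_cases h : d' = d
    · exact Or.inl h
    simp only [hcoeff, if_neg (Ne.symm h), zero_add, sub_zero] at hd'
    obtain ⟨μ, hμ, hne⟩ := Finset.exists_ne_zero_of_sum_ne_zero hd'
    exact Or.inr ⟨μ, hμ, fun h0 => hne (by rw [h0, map_zero, mul_zero])⟩

lemma stdOfPoints_empty : stdOfPoints (∅ : Set (Fin n → K)) = ∅ :=
  Set.eq_empty_of_forall_notMem fun γ hγ =>
    hγ ⟨_, by simp, (isLeadExp_monomial γ).ne_zero, isLeadExp_monomial γ⟩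

lemma setOf_mem_stdOfPoints_slice_subset (A : Set (Fin (n + 1) → K)) (γ : Fin n → ℕ) :
    {t : K | γ ∈ stdOfPoints {x : Fin n → K | Fin.snoc x t ∈ A}} ⊆ (· (Fin.last n)) '' A := by
  intro t ht
  obtain ⟨x, hx⟩ : {x : Fin n → K | Fin.snoc x t ∈ A}.Nonempty :=
    Set.nonempty_iff_ne_empty.mpr fun h => by simp [h, stdOfPoints_empty] at ht
  exact ⟨_, hx, by simp⟩

lemma exists_isLeadExp_coeff_eq_one {B : Set (Fin n → K)} {γ : Fin n → ℕ} (hγ : γ ∉ stdOfPoints B) :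
    ∃ q : MvPolynomial (Fin n) K, (∀ b ∈ B, eval b q = 0) ∧ IsLeadExp q γ ∧
      q.coeff (equivFunOnFinite.symm γ) = 1 := by
  obtain ⟨q, hvan, -, hlead, hbelow⟩ := not_not.mp hγ
  refine ⟨C (q.coeff (equivFunOnFinite.symm γ))⁻¹ * q, fun b hb => by simp [hvan b hb],
    ⟨?_, fun δ hδ => hbelow δ ?_⟩, ?_⟩
  · rw [coeff_C_mul]
    exact mul_ne_zero (inv_ne_zero hlead) hlead
  · rw [coeff_C_mul] at hδ
    exact right_ne_zero_of_mul hδ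
  · rw [coeff_C_mul, inv_mul_cancel₀ hlead]

lemma ncard_le_of_isLeadExp_snoc {A : Set (Fin (n + 1) → K)} {p : MvPolynomial (Fin (n + 1)) K}
    {γ : Fin n → ℕ} {m : ℕ} (hvan : ∀ a ∈ A, eval a p = 0) (hp : IsLeadExp p (Fin.snoc γ m)) :
    {t : K | γ ∈ stdOfPoints {x : Fin n → K | Fin.snoc x t ∈ A}}.ncard ≤ m := by
  classical
  set r := (splitLast p).coeff (equivFunOnFinite.symm γ)
  have hr : r.degree = m := (isLeadExp_snoc_iff.mp hp).1
  have hr0 : r ≠ 0 := fun h => by simp [h] at hr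
  have hroots :
      {t : K | γ ∈ stdOfPoints {x : Fin n → K | Fin.snoc x t ∈ A}} ⊆ r.roots.toFinset := by
    intro t ht
    rw [Finset.mem_coe, Multiset.mem_toFinset, Polynomial.mem_roots hr0, Polynomial.IsRoot.def]
    by_contra hne
    have hlead := isLeadExp_map_evalRingHom_splitLast hp hne
    refine ht ⟨_, fun x hx => ?_, hlead.ne_zero, hlead⟩
    rw [← eval_snoc_eq_eval_map_splitLast]
    exact hvan _ hx
  calc _ ≤ (r.roots.toFinset : Set K).ncard := Set.ncard_le_ncard hroots (Finset.finite_toSet _)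
    _ ≤ r.roots.card := by rw [Set.ncard_coe_finset]; exact Multiset.toFinset_card_le _
    _ ≤ r.natDegree := Polynomial.card_roots' r
    _ = m := Polynomial.natDegree_eq_of_degree_eq_some hr

lemma exists_isLeadExp_snoc_of_ncard_le {A : Set (Fin (n + 1) → K)} (hA : A.Finite)
    {γ : Fin n → ℕ} {m : ℕ}
    (hm : {t : K | γ ∈ stdOfPoints {x : Fin n → K | Fin.snoc x t ∈ A}}.ncard ≤ m) :
    ∃ p : MvPolynomial (Fin (n + 1)) K, (∀ a ∈ A, eval a p = 0) ∧ IsLeadExp p (Fin.snoc γ m) := by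
  classical
  set Λ := {t : K | γ ∈ stdOfPoints {x : Fin n → K | Fin.snoc x t ∈ A}}
  have hlast : ((· (Fin.last n)) '' A).Finite := hA.image _
  have hΛ : Λ.Finite := hlast.subset (setOf_mem_stdOfPoints_slice_subset A γ)
  obtain ⟨e, he, heΛ⟩ := exists_degree_eq_forall_eval_eq_zero hΛ.toFinset
    (Set.ncard_eq_toFinset_card Λ hΛ ▸ hm)
  have hout : ∀ μ ∈ hlast.toFinset \ hΛ.toFinset, μ ∉ Λ := fun μ hμ => by
    simpa using (Finset.mem_sdiff.mp hμ).2
  choose! q hq using fun t (ht : t ∉ Λ) => exists_isLeadExp_coeff_eq_one ht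
  obtain ⟨Q, hQeval, hQγ, hQsupp⟩ := exists_interpolation_of_coeff_eq_one
    (hlast.toFinset \ hΛ.toFinset) q (equivFunOnFinite.symm γ)
    fun μ hμ => (hq μ (hout μ hμ)).2.2
  refine ⟨splitLast.symm (C e * Q), fun a ha => ?_, isLeadExp_snoc_iff.mpr ⟨?_, fun δ hδ => ?_⟩⟩
  · obtain ⟨x, t, rfl⟩ : ∃ x t, a = Fin.snoc x t := ⟨_, _, (Fin.snoc_init_self a).symm⟩
    rw [eval_snoc_eq_eval_map_splitLast, AlgEquiv.apply_symm_apply, map_mul, map_C, eval_mul,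
      eval_C, Polynomial.coe_evalRingHom]
    by_cases ht : t ∈ Λ
    · rw [heΛ t (hΛ.mem_toFinset.mpr ht), zero_mul]
    · have ht' : t ∈ hlast.toFinset \ hΛ.toFinset :=
        Finset.mem_sdiff.mpr ⟨hlast.mem_toFinset.mpr ⟨_, ha, by simp⟩, by simpa using ht⟩
      rw [hQeval t ht', (hq t ht).1 x ha, mul_zero]
  · rw [AlgEquiv.apply_symm_apply, coeff_C_mul, hQγ, mul_one, he]
  · rw [AlgEquiv.apply_symm_apply, coeff_C_mul] at hδ
    rcases hQsupp _ (right_ne_zero_of_mul hδ) with h | ⟨μ, hμ, h⟩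
    · exact Or.inl (equivFunOnFinite.symm.injective h)
    · rcases (hq μ (hout μ hμ)).2.1.2 δ h with h | h
      exacts [Or.inl h, Or.inr h]

end Field

theorem stdOfPoints_connect_four_general {K : Type*} [Field K] {n : ℕ}
    (A : Set (Fin (n + 1) → K)) (hA : A.Finite) :
    stdOfPoints A = {β : Fin (n + 1) → ℕ |
      β (Fin.last n) <
        {lam : K | Fin.init β ∈ stdOfPoints {γ : Fin n → K | Fin.snoc γ lam ∈ A}}.ncard} := by
  ext β
  obtain ⟨γ, m, rfl⟩ : ∃ γ m, β = Fin.snoc γ m := ⟨_, _, (Fin.snoc_init_self β).symm⟩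
  rw [Set.mem_ofPred_eq, Fin.init_snoc, Fin.snoc_last, ← not_le]
  constructor
  · intro hmem hle
    obtain ⟨p, hvan, hp⟩ := exists_isLeadExp_snoc_of_ncard_le hA hle
    exact hmem ⟨p, hvan, hp.ne_zero, hp⟩
  · rintro hlt ⟨p, hvan, -, hp⟩
    exact hlt (ncard_le_of_isLeadExp_snoc hvan hp)

/-- Connect Four theorem for points: for a finite set `A ⊆ F̄^{n+1}` over an
algebraically closed field, `D(A) = Σ_λ D(A_λ)` is the Connect Four sum of the
standard sets of the slices `A_λ = A ∩ {x_{n+1} = λ}`: the column of `D(A)` over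
`γ` has height equal to the number of `λ` with `γ ∈ D(A_λ)`. -/
theorem stdOfPoints_connect_four {K : Type*} [Field K] [IsAlgClosed K] {n : ℕ}
    (A : Set (Fin (n + 1) → K)) (hA : A.Finite) :
    stdOfPoints A = {β : Fin (n + 1) → ℕ |
      β (Fin.last n) <
        {lam : K | Fin.init β ∈ stdOfPoints {γ : Fin n → K | Fin.snoc γ lam ∈ A}}.ncard} :=
  stdOfPoints_connect_four_general A hA
end

section
/- For a finite standard set Δ ⊆ ℕ^n, a Connect Four decomposition {Δ_i : i ∈ I} of Δ into standard sets of ℕ^{n−1}, and projections q_j(β₁,…,β_n) = (β_j,…,β_n), the dimension count Σ_{i∈I} Σ_{j=1}^{n−1} #q̄_j(Δ_i) + #q_n(Δ) = Σ_{j=1}^{n} #q_j(Δ) holds, where q̄_j is the analogous projection ℕ^{n−1} → ℕ^{n−j}. -/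
/-- The projection `q_{k+1} : ℕ^n → ℕ^{n−k}` dropping the first `k` coordinates. -/
def tailProj (k : ℕ) {n : ℕ} (β : Fin n → ℕ) : Fin (n - k) → ℕ :=
  fun i => β ⟨k + i.1, by omega⟩

/- ---------------- auxiliary lemmas ---------------- -/

lemma snoc_mk_lt {n : ℕ} (p : Fin n → ℕ) (x : ℕ) {j : ℕ} (h : j < n + 1) (h2 : j < n) :
    Fin.snoc (α := fun _ => ℕ) p x ⟨j, h⟩ = p ⟨j, h2⟩ := by
  have e : (⟨j, h⟩ : Fin (n + 1)) = Fin.castSucc ⟨j, h2⟩ := rfl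
  rw [e, Fin.snoc_castSucc]

lemma snoc_mk_last {n : ℕ} (p : Fin n → ℕ) (x : ℕ) (h : n < n + 1) :
    Fin.snoc (α := fun _ => ℕ) p x ⟨n, h⟩ = x := by
  have e : (⟨n, h⟩ : Fin (n + 1)) = Fin.last n := rfl
  rw [e, Fin.snoc_last]

lemma exchange_sums {α β : Type*} (M : Multiset α) (G : Finset β) (f : α → β → ℕ) :
    ∑ γ ∈ G, (M.map fun D => f D γ).sum = (M.map fun D => ∑ γ ∈ G, f D γ).sum := by
  induction M using Multiset.induction with
  | empty => simp
  | cons a s ih => simp [Finset.sum_add_distrib, ih]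

lemma ncard_cfSumMultiset {m : ℕ} (M : Multiset (Set (Fin m → ℕ)))
    (hfin : ∀ D ∈ M, D.Finite) (hS : (cfSumMultiset M).Finite) :
    (cfSumMultiset M).ncard = (M.map Set.ncard).sum := by
  classical
  have hmem : ∀ β, β ∈ cfSumMultiset M ↔
      β (Fin.last m) < (M.map fun D => Set.indicator D (fun _ => (1 : ℕ)) (Fin.init β)).sum :=
    fun β => Iff.rfl
  set T : Finset (Fin (m + 1) → ℕ) := hS.toFinset with hT
  set G : Finset (Fin m → ℕ) := T.image Fin.init with hG
  have hfiber : ∀ γ, T.filter (fun β => Fin.init β = γ)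
      = (Finset.range ((M.map fun D => Set.indicator D (fun _ => (1 : ℕ)) γ).sum)).image
          (fun j => Fin.snoc γ j) := by
    intro γ
    ext β
    simp only [Finset.mem_filter, Finset.mem_image, Finset.mem_range, hT,
      Set.Finite.mem_toFinset]
    constructor
    · rintro ⟨hβ, hinit⟩
      refine ⟨β (Fin.last m), ?_, ?_⟩
      · rw [hmem, hinit] at hβ; exact hβ
      · rw [← hinit]; exact Fin.snoc_init_self β
    · rintro ⟨j, hj, rfl⟩
      refine ⟨?_, by simp⟩
      rw [hmem, Fin.init_snoc, Fin.snoc_last]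
      exact hj
  have hcard : T.card
      = ∑ γ ∈ G, (M.map fun D => Set.indicator D (fun _ => (1 : ℕ)) γ).sum := by
    rw [Finset.card_eq_sum_card_fiberwise
      (f := Fin.init) (t := G) (fun x hx => Finset.mem_image_of_mem _ hx)]
    refine Finset.sum_congr rfl fun γ _ => ?_
    rw [hfiber γ, Finset.card_image_of_injective _ ?_, Finset.card_range]
    intro a b hab
    have := congrArg (fun f => f (Fin.last m)) hab
    simpa using this
  have hsubG : ∀ D ∈ M, ∀ γ ∈ D, γ ∈ G := by
    intro D hD γ hγ
    have h1 : (0 : ℕ) < (M.map fun D => Set.indicator D (fun _ => (1 : ℕ)) γ).sum := by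
      have hmm : Set.indicator D (fun _ => (1 : ℕ)) γ
          ∈ M.map (fun D => Set.indicator D (fun _ => (1 : ℕ)) γ) :=
        Multiset.mem_map_of_mem _ hD
      have h2 := Multiset.single_le_sum (fun x _ => Nat.zero_le x) _ hmm
      rw [Set.indicator_of_mem hγ] at h2
      omega
    have hβ : Fin.snoc γ 0 ∈ cfSumMultiset M := by
      rw [hmem, Fin.init_snoc, Fin.snoc_last]
      exact h1
    exact Finset.mem_image.2 ⟨Fin.snoc γ 0, (Set.Finite.mem_toFinset hS).2 hβ, by simp⟩
  have hsum : ∀ D ∈ M, ∑ γ ∈ G, Set.indicator D (fun _ => (1 : ℕ)) γ = D.ncard := by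
    intro D hD
    have h1 : ∑ γ ∈ G, Set.indicator D (fun _ => (1 : ℕ)) γ
        = ∑ γ ∈ G.filter (fun γ => γ ∈ D), 1 := by
      rw [Finset.sum_filter]
      refine Finset.sum_congr rfl fun γ _ => ?_
      by_cases hγ : γ ∈ D <;> simp [Set.indicator_apply, hγ]
    have h2 : G.filter (fun γ => γ ∈ D) = (hfin D hD).toFinset := by
      ext γ
      simp only [Finset.mem_filter, Set.Finite.mem_toFinset]
      exact ⟨fun h => h.2, fun h => ⟨hsubG D hD γ h, h⟩⟩
    rw [h1, h2, Finset.sum_const, smul_eq_mul, mul_one,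
      Set.ncard_eq_toFinset_card D (hfin D hD)]
  calc (cfSumMultiset M).ncard = T.card := Set.ncard_eq_toFinset_card _ hS
    _ = ∑ γ ∈ G, (M.map fun D => Set.indicator D (fun _ => (1 : ℕ)) γ).sum := hcard
    _ = (M.map fun D => ∑ γ ∈ G, Set.indicator D (fun _ => (1 : ℕ)) γ).sum :=
        exchange_sums M G _
    _ = (M.map Set.ncard).sum := congrArg Multiset.sum (Multiset.map_congr rfl hsum)

lemma image_cfSumMultiset {n k : ℕ} (hk : k ≤ n) (M : Multiset (Set (Fin n → ℕ)))
    (hstd : ∀ D ∈ M, IsStdSet D) :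
    (fun (β : Fin (n + 1) → ℕ) (i : Fin (n - k + 1)) => β ⟨k + i.1, by omega⟩) '' cfSumMultiset M
      = cfSumMultiset (M.map (Set.image (tailProj k))) := by
  classical
  ext g
  simp only [cfSumMultiset, Set.mem_image, Set.mem_setOf_eq, Multiset.map_map,
    Function.comp_apply]
  constructor
  · rintro ⟨β, hβ, rfl⟩
    have hini : Fin.init (fun (i : Fin (n - k + 1)) => β ⟨k + i.1, by omega⟩)
        = tailProj k (Fin.init β) := funext fun j => rfl
    have hstep : (M.map fun D => Set.indicator D (fun _ => (1 : ℕ)) (Fin.init β)).sum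
        ≤ (M.map fun D => Set.indicator (tailProj k '' D) (fun _ => (1 : ℕ))
            (Fin.init (fun (i : Fin (n - k + 1)) => β ⟨k + i.1, by omega⟩))).sum := by
      rw [hini]
      refine Multiset.sum_map_le_sum_map _ _ fun D _ => ?_
      by_cases hb : Fin.init β ∈ D
      · have h3 : tailProj k (Fin.init β) ∈ tailProj k '' D := ⟨_, hb, rfl⟩
        simp [Set.indicator_of_mem hb, Set.indicator_of_mem h3]
      · simp [Set.indicator_of_notMem hb]
    have hlast : (fun (i : Fin (n - k + 1)) => β ⟨k + i.1, by omega⟩) (Fin.last (n - k))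
        = β (Fin.last n) := congrArg β (Fin.ext (show k + (n - k) = n by omega))
    calc (fun (i : Fin (n - k + 1)) => β ⟨k + i.1, by omega⟩) (Fin.last (n - k))
        = β (Fin.last n) := hlast
      _ < (M.map fun D => Set.indicator D (fun _ => (1 : ℕ)) (Fin.init β)).sum := hβ
      _ ≤ _ := hstep
  · intro hg
    set γ₀ : Fin n → ℕ :=
      fun j => if _ : j.1 < k then 0 else Fin.init g ⟨j.1 - k, by omega⟩ with hγ₀
    have hkey : ∀ D ∈ M, Fin.init g ∈ tailProj k '' D → γ₀ ∈ D := by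
      rintro D hD ⟨δ, hδ, hproj⟩
      by_contra h0
      have hle : ∀ j, γ₀ j ≤ δ j := by
        intro j
        by_cases hj : j.1 < k
        · simp [hγ₀, hj]
        · have he : γ₀ j = δ j := by
            simp only [hγ₀]
            rw [dif_neg hj, ← hproj]
            exact congrArg δ (Fin.ext (show k + (j.1 - k) = j.1 by omega))
          omega
      have heq : γ₀ + (fun j => δ j - γ₀ j) = δ := by
        funext j
        have := hle j
        simp only [Pi.add_apply]
        omega
      refine (hstd D hD γ₀ (fun j => δ j - γ₀ j) h0) ?_
      rw [heq]
      exact hδ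
    have hlt : g (Fin.last (n - k))
        < (M.map fun D => Set.indicator D (fun _ => (1 : ℕ)) γ₀).sum := by
      refine lt_of_lt_of_le hg ?_
      refine Multiset.sum_map_le_sum_map _ _ fun D hD => ?_
      by_cases hb : Fin.init g ∈ tailProj k '' D
      · simp [Set.indicator_of_mem hb, Set.indicator_of_mem (hkey D hD hb)]
      · simp [Set.indicator_of_notMem hb]
    refine ⟨Fin.snoc γ₀ (g (Fin.last (n - k))), ?_, ?_⟩
    · rw [Fin.snoc_last, Fin.init_snoc]
      exact hlt
    · funext i
      have hlt1 : k + i.1 < n + 1 := by omega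
      show Fin.snoc (α := fun _ => ℕ) γ₀ (g (Fin.last (n - k))) ⟨k + i.1, hlt1⟩ = g i
      by_cases hi : i.1 < n - k
      · rw [snoc_mk_lt _ _ hlt1 (show k + i.1 < n by omega)]
        simp only [hγ₀]
        rw [dif_neg (show ¬ (k + i.1 < k) by omega)]
        exact congrArg g (Fin.ext (show k + i.1 - k = i.1 by omega))
      · have h1 : (⟨k + i.1, hlt1⟩ : Fin (n + 1)) = ⟨n, by omega⟩ :=
          Fin.ext (show k + i.1 = n by omega)
        rw [h1, snoc_mk_last]
        exact congrArg g (Fin.ext (show n - k = i.1 by omega))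

/-- The dimension count for a Connect Four decomposition `Δ = Σ_{i∈I} Δ_i`:
`Σ_{i∈I} Σ_{j=1}^{n} #q̄_j(Δ_i) + #q_{n+1}(Δ) = Σ_{j=1}^{n+1} #q_j(Δ)`. -/
theorem decomposition_dimension_count {n : ℕ} (Δ : Set (Fin (n + 1) → ℕ))
    (hΔ : IsStdSet Δ) (hΔfin : Δ.Finite)
    (M : Multiset (Set (Fin n → ℕ))) (hM : IsCFDecomposition M Δ) :
    (M.map fun D => ∑ k ∈ Finset.range n, (tailProj k '' D).ncard).sum
        + ((fun β => β (Fin.last n)) '' Δ).ncard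
      = ∑ k ∈ Finset.range (n + 1), (tailProj k '' Δ).ncard := by
  obtain ⟨hDs, hsum⟩ := hM
  have hA : ∀ k, k ≤ n → (tailProj k '' Δ).ncard
      = (M.map fun D => (tailProj k '' D).ncard).sum := by
    intro k hk
    have hrinj : Function.Injective
        (fun (f : Fin (n + 1 - k) → ℕ) (i : Fin (n - k + 1)) => f ⟨i.1, by omega⟩) := by
      intro f f' hff
      funext j
      exact congrFun hff ⟨j.1, by omega⟩
    have h1 : cfSumMultiset (M.map (Set.image (tailProj k)))
        = (fun (f : Fin (n + 1 - k) → ℕ) (i : Fin (n - k + 1)) => f ⟨i.1, by omega⟩)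
            '' (tailProj k '' Δ) := by
      rw [← image_cfSumMultiset hk M (fun D hD => (hDs D hD).1), hsum, ← Set.image_comp]
      rfl
    have hmemfin : ∀ D' ∈ M.map (Set.image (tailProj k)), D'.Finite := by
      intro D' hD'
      obtain ⟨D, hD, rfl⟩ := Multiset.mem_map.1 hD'
      exact ((hDs D hD).2.1).image _
    have hfin' : (cfSumMultiset (M.map (Set.image (tailProj k)))).Finite := by
      rw [h1]; exact (hΔfin.image _).image _
    have h2 := ncard_cfSumMultiset _ hmemfin hfin'
    rw [h1, Set.ncard_image_of_injective _ hrinj, Multiset.map_map] at h2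
    exact h2
  have hB : ((fun β => β (Fin.last n)) '' Δ).ncard = (tailProj n '' Δ).ncard := by
    have h0 : 0 < n + 1 - n := by omega
    have hc : (fun (β : Fin (n + 1) → ℕ) => β (Fin.last n))
        = (fun (f : Fin (n + 1 - n) → ℕ) => f ⟨0, h0⟩) ∘ tailProj n := by
      funext β
      exact congrArg β (Fin.ext (show (n : ℕ) = n + 0 by omega))
    have hinj : Function.Injective (fun (f : Fin (n + 1 - n) → ℕ) => f ⟨0, h0⟩) := by
      intro f f' hff
      funext j
      have hj : j = (⟨0, h0⟩ : Fin (n + 1 - n)) := Fin.ext (by clear hff; omega)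
      rw [hj]
      exact hff
    rw [hc, Set.image_comp, Set.ncard_image_of_injective _ hinj]
  have hR : ∑ k ∈ Finset.range n, (tailProj k '' Δ).ncard
      = (M.map fun D => ∑ k ∈ Finset.range n, (tailProj k '' D).ncard).sum :=
    calc ∑ k ∈ Finset.range n, (tailProj k '' Δ).ncard
        = ∑ k ∈ Finset.range n, (M.map fun D => (tailProj k '' D).ncard).sum :=
          Finset.sum_congr rfl fun k hk => hA k (Finset.mem_range.1 hk).le
      _ = (M.map fun D => ∑ k ∈ Finset.range n, (tailProj k '' D).ncard).sum :=
          exchange_sums M (Finset.range n) fun D k => (tailProj k '' D).ncard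
  rw [Finset.sum_range_succ, hR, hB]
end

section
/- Every admissible subgraph of the iterated decomposition graph of a finite standard set Δ ⊆ ℕ^n has exactly #Δ leaves. -/
/-- `AssembleCount n Δ L` means: `Δ ∈ 𝒟_n` can be assembled from single points by
iterated Connect Four addition, via an assembly tree (an admissible subgraph of the
iterated decomposition graph) with `L` leaves. At the bottom (`n = 0`) lies the
single point of `𝒟₀`; an assembly of `Δ ∈ 𝒟_{n+1}` consists of a Connect Four
decomposition of `Δ` together with an assembly of each of its members. -/
inductive AssembleCount : ∀ n : ℕ, Set (Fin n → ℕ) → ℕ → Prop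
  | base : AssembleCount 0 Set.univ 1
  | step {n : ℕ} (P : Multiset (Set (Fin n → ℕ) × ℕ))
      (hstd : ∀ p ∈ P, IsStdSet p.1 ∧ p.1.Finite ∧ p.1.Nonempty)
      (hrec : ∀ p ∈ P, AssembleCount n p.1 p.2) :
      AssembleCount (n + 1) (cfSumMultiset (P.map Prod.fst)) ((P.map Prod.snd).sum)

lemma cfSumMultiset_key {n : ℕ} (M : Multiset (Set (Fin n → ℕ)))
    (hfin : ∀ D ∈ M, D.Finite) :
    (cfSumMultiset M).Finite ∧ (cfSumMultiset M).ncard = (M.map Set.ncard).sum := by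
  induction M using Multiset.induction with
  | empty =>
      have : cfSumMultiset (0 : Multiset (Set (Fin n → ℕ))) = ∅ := by
        ext β; simp [cfSumMultiset]
      simp [this]
  | cons D M ih =>
      have hD : D.Finite := hfin D (Multiset.mem_cons_self _ _)
      obtain ⟨hBfin, hBcard⟩ := ih (fun D' hD' => hfin D' (Multiset.mem_cons_of_mem hD'))
      set f : (Fin n → ℕ) → ℕ :=
        fun γ => (M.map fun D' => Set.indicator D' (fun _ => (1 : ℕ)) γ).sum with hf
      set g : (Fin n → ℕ) → (Fin (n + 1) → ℕ) := fun γ => Fin.snoc γ (f γ) with hg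
      have hfval : ∀ γ, (M.map fun D' => Set.indicator D' (fun _ => (1 : ℕ)) γ).sum = f γ :=
        fun _ => rfl
      have hsplit : cfSumMultiset (D ::ₘ M)
          = cfSumMultiset M ∪ g '' D := by
        ext β
        simp only [cfSumMultiset, Set.mem_setOf_eq, Multiset.map_cons, Multiset.sum_cons,
          Set.mem_union, Set.mem_image]
        constructor
        · intro hlt
          simp only [hfval] at hlt ⊢
          by_cases hmem : Fin.init β ∈ D
          · rw [Set.indicator_of_mem hmem] at hlt
            rcases lt_or_eq_of_le (Nat.lt_succ_iff.mp (by omega : β (Fin.last n) < f (Fin.init β) + 1)) with h1 | h1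
            · exact Or.inl (by simp only [← hfval] at h1; exact h1)
            · refine Or.inr ⟨Fin.init β, hmem, ?_⟩
              rw [hg]; simp only; rw [← h1]
              exact Fin.snoc_init_self β
          · rw [Set.indicator_of_notMem hmem] at hlt
            exact Or.inl (by omega)
        · rintro (h1 | ⟨γ, hγ, rfl⟩)
          · simp only [hfval] at h1 ⊢; omega
          · simp only [hg, Fin.init_snoc, Fin.snoc_last, Set.indicator_of_mem hγ]
            simp only [hfval]; omega
      have hinj : Set.InjOn g D := by
        intro a _ b _ hab
        have := congrArg Fin.init hab
        simpa [hg, Fin.init_snoc] using this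
      have himfin : (g '' D).Finite := hD.image _
      have hdisj : Disjoint (cfSumMultiset M) (g '' D) := by
        rw [Set.disjoint_right]
        rintro β ⟨γ, hγ, rfl⟩ hmem
        simp only [hg, cfSumMultiset, Set.mem_setOf_eq, Fin.init_snoc, Fin.snoc_last, hfval] at hmem
        exact lt_irrefl _ hmem
      constructor
      · rw [hsplit]; exact hBfin.union himfin
      · rw [hsplit, Set.ncard_union_eq hdisj hBfin himfin, hBcard,
          Set.ncard_image_of_injOn hinj, Multiset.map_cons, Multiset.sum_cons]
        omega

/-- Every admissible subgraph of the iterated decomposition graph of a finite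
standard set `Δ` has exactly `#Δ` leaves. -/
theorem assemble_leaves_eq_card {n : ℕ} {Δ : Set (Fin n → ℕ)} {L : ℕ}
    (h : AssembleCount n Δ L) : L = Δ.ncard := by
  induction h with
  | base =>
      rw [Set.ncard_univ]
      simp [Nat.card_unique]
  | step P hstd hrec ih =>
      have hfin : ∀ D ∈ P.map Prod.fst, D.Finite := by
        intro D hD
        obtain ⟨p, hp, rfl⟩ := Multiset.mem_map.mp hD
        exact (hstd p hp).2.1
      rw [(cfSumMultiset_key _ hfin).2, Multiset.map_map]
      apply congrArg Multiset.sum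
      exact Multiset.map_congr rfl fun p hp => ih p hp
end
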